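/- arXiv:math/0703247 — 2 statements merged into one kernel-verified Lean document; each statement's English description precedes it below -/
import Mathlib

section
/- The operator 𝒜 is self-adjoint in the Krein space (H_{1/2} × H, [·,·]), where [(x₁,y₁),(x₂,y₂)] = ⟨x₁,x₂⟩_{H_{1/2}} − ⟨y₁,y₂⟩_H; equivalently, ⟨J𝒜x, y⟩ = ⟨Jx, 𝒜y⟩ for all x, y ∈ 𝒟(𝒜) with J = [[I,0],[0,-I]], and J𝒜 is self-adjoint. -/
open scoped InnerProductSpace ComplexConjugate
open Filter

/-- Abstract setup for the second order equation `z̈ + A₀ z + D ż = 0`: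
`Hhalf` plays the role of `H_{1/2} = 𝒟(A₀^{1/2})` with the norm `‖A₀^{1/2}·‖`, `H` is the
pivot Hilbert space and `Hm` is the dual `H_{-1/2}`; `ι : H_{1/2} → H` and `j : H → H_{-1/2}`
are the (dense, injective, continuous) inclusions; the uniformly positive self-adjoint
operator `A₀` induces an isometric isomorphism `A₀ : H_{1/2} → H_{-1/2}`; the damping
operator `D : H_{1/2} → H_{-1/2}` is bounded, and `A₀^{-1/2} D A₀^{-1/2}` is self-adjoint
nonnegative, expressed via the duality pairing
`⟨u, z⟩_{H_{-1/2}×H_{1/2}} = ⟪A₀⁻¹ u, z⟫_{H_{1/2}}`. -/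
structure BeamSetup (Hhalf H Hm : Type*)
    [NormedAddCommGroup Hhalf] [InnerProductSpace ℂ Hhalf] [CompleteSpace Hhalf]
    [NormedAddCommGroup H] [InnerProductSpace ℂ H] [CompleteSpace H]
    [NormedAddCommGroup Hm] [InnerProductSpace ℂ Hm] [CompleteSpace Hm] : Type _ where
  ι : Hhalf →L[ℂ] H
  ι_inj : Function.Injective ι
  ι_dense : DenseRange ι
  j : H →L[ℂ] Hm
  j_inj : Function.Injective j
  A₀ : Hhalf ≃ₗᵢ[ℂ] Hm
  compat : ∀ (y : H) (z : Hhalf), ⟪A₀.symm (j y), z⟫_ℂ = ⟪y, ι z⟫_ℂ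
  D : Hhalf →L[ℂ] Hm
  D_symm : ∀ z w : Hhalf, ⟪A₀.symm (D z), w⟫_ℂ = ⟪z, A₀.symm (D w)⟫_ℂ
  D_nonneg : ∀ z : Hhalf, 0 ≤ (⟪A₀.symm (D z), z⟫_ℂ).re

namespace BeamSetup

variable {Hhalf H Hm : Type*}
    [NormedAddCommGroup Hhalf] [InnerProductSpace ℂ Hhalf] [CompleteSpace Hhalf]
    [NormedAddCommGroup H] [InnerProductSpace ℂ H] [CompleteSpace H]
    [NormedAddCommGroup Hm] [InnerProductSpace ℂ Hm] [CompleteSpace Hm]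
    (S : BeamSetup Hhalf H Hm)

/-- `A₀⁻¹ : H_{-1/2} → H_{1/2}` as a continuous linear map. -/
noncomputable def Ai : Hm →L[ℂ] Hhalf :=
  (S.A₀.symm.toContinuousLinearEquiv : Hm ≃L[ℂ] Hhalf)

/-- `A₀⁻¹ D` as a bounded operator on `H_{1/2}`. -/
noncomputable def T : Hhalf →L[ℂ] Hhalf := S.Ai.comp S.D

/-- `A₀⁻¹ : H → H_{1/2}`. -/
noncomputable def Ainv : H →L[ℂ] Hhalf := S.Ai.comp S.j

/-- `A₀⁻¹` considered as a bounded operator on `H_{1/2}`. -/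
noncomputable def AinvR : Hhalf →L[ℂ] Hhalf := S.Ainv.comp S.ι

/-- `A₀⁻¹` considered as a bounded operator on `H`. -/
noncomputable def AinvH : H →L[ℂ] H := S.ι.comp S.Ainv

/-- `λ` is an eigenvalue of the operator matrix `𝒜 = [[0, I], [-A₀, -D]]` with domain
`𝒟(𝒜) = {(z,w) ∈ H_{1/2} × H_{1/2} : A₀ z + D w ∈ H}`: there is a nonzero
`(z, ι w) ∈ 𝒟(𝒜)` (the domain condition being `j y = A₀ z + D w`, so that
`𝒜 (z, ι w) = (w, -y)`) with `𝒜 (z, ι w) = λ • (z, ι w)`. -/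
def IsEigenvalue (lam : ℂ) : Prop :=
  ∃ (z w : Hhalf) (y : H), S.j y = S.A₀ z + S.D w ∧
    ((z, S.ι w) : Hhalf × H) ≠ 0 ∧ w = lam • z ∧ -y = lam • S.ι w

/-- `λ` belongs to the resolvent set of `𝒜`: there is a bounded operator `R` on
`H_{1/2} × H` mapping onto `𝒟(𝒜)` which inverts `𝒜 - λ` from both sides. -/
def InResolvent (lam : ℂ) : Prop :=
  ∃ R : (Hhalf × H) →L[ℂ] (Hhalf × H),
    (∀ q : Hhalf × H, ∃ (z w : Hhalf) (y : H),
        R q = (z, S.ι w) ∧ S.j y = S.A₀ z + S.D w ∧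
        ((w, -y) : Hhalf × H) - lam • ((z, S.ι w) : Hhalf × H) = q) ∧
    (∀ (z w : Hhalf) (y : H), S.j y = S.A₀ z + S.D w →
        R (((w, -y) : Hhalf × H) - lam • ((z, S.ι w) : Hhalf × H)) = (z, S.ι w))


end BeamSetup

/-- The Hilbert space `H_{1/2} × H` (product with the ℓ²-norm). -/
abbrev BeamSetup.State (Hhalf H : Type*) [NormedAddCommGroup Hhalf] [NormedAddCommGroup H] :=
  WithLp 2 (Hhalf × H)

namespace BeamSetup

variable {Hhalf H Hm : Type*}
    [NormedAddCommGroup Hhalf] [InnerProductSpace ℂ Hhalf] [CompleteSpace Hhalf]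
    [NormedAddCommGroup H] [InnerProductSpace ℂ H] [CompleteSpace H]
    [NormedAddCommGroup Hm] [InnerProductSpace ℂ Hm] [CompleteSpace Hm]
    (S : BeamSetup Hhalf H Hm)

/-- Identification of `H_{1/2} × H` with the underlying product. -/
noncomputable def eqv : State Hhalf H ≃ₗ[ℂ] Hhalf × H := WithLp.linearEquiv 2 ℂ (Hhalf × H)

/-- The domain `𝒟(𝒜) = {(z,w) ∈ H_{1/2} × H_{1/2} : A₀ z + D w ∈ H}` of `𝒜`,
as a submodule of the state space `H_{1/2} × H`. -/
def domA : Submodule ℂ (State Hhalf H) where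
  carrier := {p | ∃ (w : Hhalf) (y : H), S.ι w = (eqv p).2 ∧ S.j y = S.A₀ (eqv p).1 + S.D w}
  zero_mem' := ⟨0, 0, by simp, by simp⟩
  add_mem' := by
    rintro p q ⟨w₁, y₁, hw₁, hy₁⟩ ⟨w₂, y₂, hw₂, hy₂⟩
    exact ⟨w₁ + w₂, y₁ + y₂, by simp [hw₁, hw₂], by simp [hy₁, hy₂]; abel⟩
  smul_mem' := by
    rintro c p ⟨w, y, hw, hy⟩
    exact ⟨c • w, c • y, by simp [hw], by simp [hy]⟩

/-- For `p = (z, ι w) ∈ 𝒟(𝒜)`, the element `w ∈ H_{1/2}`. -/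
noncomputable def witw (p : S.domA) : Hhalf := p.2.choose

/-- For `p = (z, ι w) ∈ 𝒟(𝒜)`, the element `y ∈ H` with `j y = A₀ z + D w`. -/
noncomputable def wity (p : S.domA) : H := p.2.choose_spec.choose

lemma witw_spec (p : S.domA) : S.ι (S.witw p) = (eqv (p : State Hhalf H)).2 :=
  p.2.choose_spec.choose_spec.1

lemma wity_spec (p : S.domA) :
    S.j (S.wity p) = S.A₀ (eqv (p : State Hhalf H)).1 + S.D (S.witw p) :=
  p.2.choose_spec.choose_spec.2

lemma witw_add (p q : S.domA) : S.witw (p + q) = S.witw p + S.witw q := by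
  apply S.ι_inj
  simp only [map_add, witw_spec, Submodule.coe_add, Prod.snd_add]

lemma wity_add (p q : S.domA) : S.wity (p + q) = S.wity p + S.wity q := by
  apply S.j_inj
  simp only [map_add, wity_spec, witw_add, Submodule.coe_add, Prod.fst_add, map_add]
  abel

lemma witw_smul (c : ℂ) (p : S.domA) : S.witw (c • p) = c • S.witw p := by
  apply S.ι_inj
  simp only [map_smul, witw_spec, Submodule.coe_smul, Prod.smul_snd]

lemma wity_smul (c : ℂ) (p : S.domA) : S.wity (c • p) = c • S.wity p := by
  apply S.j_inj
  simp only [map_smul, wity_spec, witw_smul, Submodule.coe_smul, Prod.smul_fst, map_smul,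
    smul_add]

/-- The operator matrix `𝒜 = [[0, I], [-A₀, -D]]` as a partially defined linear operator
on the Hilbert space `H_{1/2} × H`: `𝒜 (z, ι w) = (w, -(A₀ z + D w))`. -/
noncomputable def Aop : State Hhalf H →ₗ.[ℂ] State Hhalf H where
  domain := S.domA
  toFun :=
  { toFun := fun p => eqv.symm (S.witw p, -(S.wity p))
    map_add' := fun p q => by
      simp only [witw_add, wity_add, ← map_add, Prod.mk_add_mk, neg_add]
    map_smul' := fun c p => by
      simp only [witw_smul, wity_smul, RingHom.id_apply, ← map_smul, Prod.smul_mk, smul_neg] }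

/-- The operator `J𝒜`, where `J = [[I, 0], [0, -I]]`:  `J𝒜 (z, ι w) = (w, A₀ z + D w)`. -/
noncomputable def JA : State Hhalf H →ₗ.[ℂ] State Hhalf H where
  domain := S.domA
  toFun :=
  { toFun := fun p => eqv.symm (S.witw p, S.wity p)
    map_add' := fun p q => by
      simp only [witw_add, wity_add, ← map_add, Prod.mk_add_mk]
    map_smul' := fun c p => by
      simp only [witw_smul, wity_smul, RingHom.id_apply, ← map_smul, Prod.smul_mk] }

/-- The domain `J 𝒟(𝒜)` of the operator `J𝒜J`. -/
def domAJ : Submodule ℂ (State Hhalf H) where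
  carrier := {p | ∃ (w : Hhalf) (y : H), S.ι w = -(eqv p).2 ∧ S.j y = S.A₀ (eqv p).1 + S.D w}
  zero_mem' := ⟨0, 0, by simp, by simp⟩
  add_mem' := by
    rintro p q ⟨w₁, y₁, hw₁, hy₁⟩ ⟨w₂, y₂, hw₂, hy₂⟩
    refine ⟨w₁ + w₂, y₁ + y₂, by simp [hw₁, hw₂]; abel, by simp [hy₁, hy₂]; abel⟩
  smul_mem' := by
    rintro c p ⟨w, y, hw, hy⟩
    exact ⟨c • w, c • y, by simp [hw], by simp [hy]⟩

noncomputable def witwJ (p : S.domAJ) : Hhalf := p.2.choose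
noncomputable def wityJ (p : S.domAJ) : H := p.2.choose_spec.choose

lemma witwJ_spec (p : S.domAJ) : S.ι (S.witwJ p) = -(eqv (p : State Hhalf H)).2 :=
  p.2.choose_spec.choose_spec.1

lemma wityJ_spec (p : S.domAJ) :
    S.j (S.wityJ p) = S.A₀ (eqv (p : State Hhalf H)).1 + S.D (S.witwJ p) :=
  p.2.choose_spec.choose_spec.2

lemma witwJ_add (p q : S.domAJ) : S.witwJ (p + q) = S.witwJ p + S.witwJ q := by
  apply S.ι_inj
  simp only [map_add, witwJ_spec, Submodule.coe_add, Prod.snd_add]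
  abel

lemma wityJ_add (p q : S.domAJ) : S.wityJ (p + q) = S.wityJ p + S.wityJ q := by
  apply S.j_inj
  simp only [map_add, wityJ_spec, witwJ_add, Submodule.coe_add, Prod.fst_add, map_add]
  abel

lemma witwJ_smul (c : ℂ) (p : S.domAJ) : S.witwJ (c • p) = c • S.witwJ p := by
  apply S.ι_inj
  simp only [map_smul, witwJ_spec, Submodule.coe_smul, Prod.smul_snd, smul_neg]

lemma wityJ_smul (c : ℂ) (p : S.domAJ) : S.wityJ (c • p) = c • S.wityJ p := by
  apply S.j_inj
  simp only [map_smul, wityJ_spec, witwJ_smul, Submodule.coe_smul, Prod.smul_fst, map_smul,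
    smul_add]

/-- The operator `J𝒜J`, with domain `J 𝒟(𝒜)`:  `J𝒜J (z, -ι w) = (w, A₀ z + D w)`. -/
noncomputable def JAJ : State Hhalf H →ₗ.[ℂ] State Hhalf H where
  domain := S.domAJ
  toFun :=
  { toFun := fun p => eqv.symm (S.witwJ p, S.wityJ p)
    map_add' := fun p q => by
      simp only [witwJ_add, wityJ_add, ← map_add, Prod.mk_add_mk]
    map_smul' := fun c p => by
      simp only [witwJ_smul, wityJ_smul, RingHom.id_apply, ← map_smul, Prod.smul_mk] }

end BeamSetup

open BeamSetup

/-!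
`J𝒜` has the everywhere defined inverse `B (w, y) = (A₀⁻¹ y - A₀⁻¹ D w, ι w)` on `H_{1/2} × H`,
and `B` is symmetric: `⟪A₀⁻¹ y, z⟫_{H_{1/2}} = ⟪y, ι z⟫_H` and `A₀⁻¹ D` is symmetric on `H_{1/2}`.
An operator `T` with a symmetric everywhere defined inverse `B` is self-adjoint: it is symmetric
since `⟪T p, q⟫ = ⟪T p, B T q⟫ = ⟪B T p, T q⟫`, its domain `range B` is dense because its
orthogonal complement lies in `ker B = 0`, and for `x ∈ 𝒟(T†)` the identity
`⟪u, x⟫ = ⟪B u, T† x⟫ = ⟪u, B T† x⟫` gives `x = B T† x ∈ 𝒟(T)`.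
-/

namespace LinearPMap

variable {𝕜 E : Type*} [RCLike 𝕜] [NormedAddCommGroup E] [InnerProductSpace 𝕜 E]
  {T : E →ₗ.[𝕜] E} {B : E →ₗ[𝕜] E}

theorem isFormalAdjoint_self_of_symmetric_leftInverse (hB : ∀ x y, ⟪B x, y⟫_𝕜 = ⟪x, B y⟫_𝕜)
    (hBT : ∀ p : T.domain, B (T p) = p) : T.IsFormalAdjoint T := by
  intro p q
  rw [← hBT p, ← hBT q, ← hB, hBT]

theorem dense_domain_of_symmetric_rightInverse [CompleteSpace E]
    (hB : ∀ x y, ⟪B x, y⟫_𝕜 = ⟪x, B y⟫_𝕜) (hmem : ∀ x, B x ∈ T.domain)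
    (hTB : ∀ x, T ⟨B x, hmem x⟩ = x) : Dense (T.domain : Set E) := by
  rw [Submodule.dense_iff_topologicalClosure_eq_top, Submodule.topologicalClosure_eq_top_iff,
    Submodule.eq_bot_iff]
  intro x hx
  have hBx : B x = 0 := ext_inner_left 𝕜 fun u => by
    rw [← hB, inner_zero_right]
    exact Submodule.inner_right_of_mem_orthogonal (hmem u) hx
  have h0 : (⟨B x, hmem x⟩ : T.domain) = 0 := Subtype.ext hBx
  rw [← hTB x, h0, map_zero]

theorem isSelfAdjoint_of_symmetric_inverse [CompleteSpace E]
    (hB : ∀ x y, ⟪B x, y⟫_𝕜 = ⟪x, B y⟫_𝕜) (hmem : ∀ x, B x ∈ T.domain)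
    (hTB : ∀ x, T ⟨B x, hmem x⟩ = x) (hBT : ∀ p : T.domain, B (T p) = p) :
    IsSelfAdjoint T := by
  have hd := dense_domain_of_symmetric_rightInverse hB hmem hTB
  refine le_antisymm (le_of_le_graph ?_)
    ((isFormalAdjoint_self_of_symmetric_leftInverse hB hBT).le_adjoint hd)
  rintro ⟨x, v⟩ hxv
  obtain ⟨x, rfl, rfl⟩ := (mem_graph_iff _).1 hxv
  have hx : (x : E) = B (T† x) := ext_inner_left 𝕜 fun u =>
    calc ⟪u, (x : E)⟫_𝕜 = ⟪T ⟨B u, hmem u⟩, (x : E)⟫_𝕜 := by rw [hTB]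
      _ = ⟪B u, T† x⟫_𝕜 := (adjoint_isFormalAdjoint hd).symm ⟨B u, hmem u⟩ x
      _ = ⟪u, B (T† x)⟫_𝕜 := hB _ _
  exact (mem_graph_iff _).2 ⟨⟨B (T† x), hmem _⟩, hx.symm, hTB _⟩

end LinearPMap

namespace BeamSetup

theorem inner_state {Hhalf H : Type*} [NormedAddCommGroup Hhalf] [InnerProductSpace ℂ Hhalf]
    [NormedAddCommGroup H] [InnerProductSpace ℂ H] (x x' : State Hhalf H) :
    ⟪x, x'⟫_ℂ = ⟪(eqv x).1, (eqv x').1⟫_ℂ + ⟪(eqv x).2, (eqv x').2⟫_ℂ :=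
  WithLp.prod_inner_apply x x'

variable {Hhalf H Hm : Type*}
    [NormedAddCommGroup Hhalf] [InnerProductSpace ℂ Hhalf] [CompleteSpace Hhalf]
    [NormedAddCommGroup H] [InnerProductSpace ℂ H] [CompleteSpace H]
    [NormedAddCommGroup Hm] [InnerProductSpace ℂ Hm] [CompleteSpace Hm]
    (S : BeamSetup Hhalf H Hm)

@[simp] lemma A₀_Ai (u : Hm) : S.A₀ (S.Ai u) = u := S.A₀.apply_symm_apply u

@[simp] lemma Ai_A₀ (z : Hhalf) : S.Ai (S.A₀ z) = z := S.A₀.symm_apply_apply z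

lemma inner_Ainv_left (y : H) (z : Hhalf) : ⟪S.Ainv y, z⟫_ℂ = ⟪y, S.ι z⟫_ℂ := S.compat y z

lemma inner_ι_left (z : Hhalf) (y : H) : ⟪S.ι z, y⟫_ℂ = ⟪z, S.Ainv y⟫_ℂ := by
  rw [← inner_conj_symm, ← S.inner_Ainv_left, inner_conj_symm]

lemma inner_T_left (z w : Hhalf) : ⟪S.T z, w⟫_ℂ = ⟪z, S.T w⟫_ℂ := S.D_symm z w

lemma Ainv_wity (p : S.domA) :
    S.Ainv (S.wity p) = (eqv (p : State Hhalf H)).1 + S.T (S.witw p) := by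
  simp [Ainv, T, wity_spec]

noncomputable def JAinv : State Hhalf H →ₗ[ℂ] State Hhalf H :=
  eqv.symm.toLinearMap ∘ₗ
    ((S.Ainv.toLinearMap ∘ₗ LinearMap.snd ℂ Hhalf H
        - S.T.toLinearMap ∘ₗ LinearMap.fst ℂ Hhalf H).prod
      (S.ι.toLinearMap ∘ₗ LinearMap.fst ℂ Hhalf H)) ∘ₗ eqv.toLinearMap

lemma JAinv_apply (x : State Hhalf H) :
    S.JAinv x = eqv.symm (S.Ainv (eqv x).2 - S.T (eqv x).1, S.ι (eqv x).1) := rfl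

lemma inner_JAinv_left (x x' : State Hhalf H) : ⟪S.JAinv x, x'⟫_ℂ = ⟪x, S.JAinv x'⟫_ℂ := by
  simp only [inner_state, JAinv_apply, LinearEquiv.apply_symm_apply, inner_sub_left,
    inner_sub_right, inner_Ainv_left, inner_ι_left, inner_T_left]
  ring

lemma ι_fst_eq_snd_JAinv (x : State Hhalf H) : S.ι (eqv x).1 = (eqv (S.JAinv x)).2 := by
  rw [JAinv_apply, LinearEquiv.apply_symm_apply]

lemma j_snd_eq_fst_JAinv (x : State Hhalf H) :
    S.j (eqv x).2 = S.A₀ (eqv (S.JAinv x)).1 + S.D (eqv x).1 := by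
  simp [JAinv_apply, Ainv, T]

lemma JAinv_mem_domA (x : State Hhalf H) : S.JAinv x ∈ S.domA :=
  ⟨_, _, S.ι_fst_eq_snd_JAinv x, S.j_snd_eq_fst_JAinv x⟩

lemma witw_eq {p : S.domA} {w : Hhalf} (hw : S.ι w = (eqv (p : State Hhalf H)).2) :
    S.witw p = w :=
  S.ι_inj ((S.witw_spec p).trans hw.symm)

lemma wity_eq {p : S.domA} {w : Hhalf} {y : H} (hw : S.ι w = (eqv (p : State Hhalf H)).2)
    (hy : S.j y = S.A₀ (eqv (p : State Hhalf H)).1 + S.D w) : S.wity p = y :=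
  S.j_inj (by rw [wity_spec, S.witw_eq hw, hy])

lemma JA_JAinv (x : State Hhalf H) : S.JA ⟨S.JAinv x, S.JAinv_mem_domA x⟩ = x := by
  change eqv.symm (S.witw ⟨_, S.JAinv_mem_domA x⟩, S.wity ⟨_, S.JAinv_mem_domA x⟩) = x
  rw [S.witw_eq (S.ι_fst_eq_snd_JAinv x),
    S.wity_eq (S.ι_fst_eq_snd_JAinv x) (S.j_snd_eq_fst_JAinv x)]
  exact eqv.symm_apply_apply x

lemma JAinv_JA (p : S.domA) : S.JAinv (S.JA p) = p := by
  change S.JAinv (eqv.symm (_, _)) = _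
  rw [JAinv_apply, LinearEquiv.apply_symm_apply, Ainv_wity, add_sub_cancel_right, witw_spec]
  rfl

lemma isFormalAdjoint_JA : S.JA.IsFormalAdjoint S.JA :=
  LinearPMap.isFormalAdjoint_self_of_symmetric_leftInverse S.inner_JAinv_left S.JAinv_JA

lemma isSelfAdjoint_JA : IsSelfAdjoint S.JA :=
  LinearPMap.isSelfAdjoint_of_symmetric_inverse S.inner_JAinv_left S.JAinv_mem_domA S.JA_JAinv
    S.JAinv_JA

end BeamSetup

-- In components `J𝒜 p = (witw p, wity p)`, `J p = (p₁, -p₂)` and `𝒜 q = (witw q, -wity q)`, so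
-- the first conjunct is `⟨J𝒜 p, q⟩ = ⟨J p, 𝒜 q⟩`.
/-- The operator `𝒜` is self-adjoint in the Krein space
`(H_{1/2} × H, [·,·])`, where `[(x₁,y₁),(x₂,y₂)] = ⟪x₁,x₂⟫_{H_{1/2}} − ⟪y₁,y₂⟫_H`:
equivalently, `⟨J𝒜 p, q⟩ = ⟨J p, 𝒜 q⟩` for all `p, q ∈ 𝒟(𝒜)` (written out in components,
with `J𝒜 p = (witw p, wity p)`, `J p = (p₁, -p₂)` and `𝒜 q = (witw q, -(wity q))`),
and `J𝒜` is self-adjoint. -/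
theorem statement3 {Hhalf H Hm : Type*}
    [NormedAddCommGroup Hhalf] [InnerProductSpace ℂ Hhalf] [CompleteSpace Hhalf]
    [NormedAddCommGroup H] [InnerProductSpace ℂ H] [CompleteSpace H]
    [NormedAddCommGroup Hm] [InnerProductSpace ℂ Hm] [CompleteSpace Hm]
    (S : BeamSetup Hhalf H Hm) :
    (∀ p q : S.domA,
      ⟪S.witw p, (eqv (q : State Hhalf H)).1⟫_ℂ
        + ⟪S.wity p, (eqv (q : State Hhalf H)).2⟫_ℂ
      = ⟪(eqv (p : State Hhalf H)).1, S.witw q⟫_ℂ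
        + ⟪-(eqv (p : State Hhalf H)).2, -(S.wity q)⟫_ℂ) ∧
    _root_.IsSelfAdjoint S.JA := by
  refine ⟨fun p q => ?_, S.isSelfAdjoint_JA⟩
  rw [inner_neg_neg]
  exact S.isFormalAdjoint_JA p q
end

section
/- Every λ ∈ ℂ with ‖λA₀⁻¹D + λ²A₀⁻¹‖_{ℒ(H_{1/2})} < 1 belongs to the resolvent set of 𝒜. -/
/-! Writing `w = f + λ z`, the equation `(𝒜 - λ)(z, w) = (f, g)` reduces to a single equation
`A₀⁻¹ L(λ) z = (bounded function of (f, g))` for the quadratic pencil `L(λ) = A₀ + λ D + λ²`.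
Since `A₀⁻¹ L(λ) = I + (λ A₀⁻¹ D + λ² A₀⁻¹)`, it is invertible by the Neumann series when the
perturbation has norm `< 1`, and inverting it yields a bounded resolvent. -/

open scoped InnerProductSpace ComplexConjugate
open Filter

open BeamSetup

namespace BeamSetup

variable {Hhalf H Hm : Type*}
    [NormedAddCommGroup Hhalf] [InnerProductSpace ℂ Hhalf] [CompleteSpace Hhalf]
    [NormedAddCommGroup H] [InnerProductSpace ℂ H] [CompleteSpace H]
    [NormedAddCommGroup Hm] [InnerProductSpace ℂ Hm] [CompleteSpace Hm]
    (S : BeamSetup Hhalf H Hm)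

open ContinuousLinearMap
open scoped Ring

noncomputable def pencil (lam : ℂ) : Hhalf →L[ℂ] Hhalf :=
  1 + (lam • S.T + lam ^ 2 • S.AinvR)

noncomputable def resolventRhs (lam : ℂ) : (Hhalf × H) →L[ℂ] Hhalf :=
  (S.T + lam • S.AinvR) ∘L fst ℂ Hhalf H + S.Ainv ∘L snd ℂ Hhalf H

noncomputable def resolventFst (lam : ℂ) : (Hhalf × H) →L[ℂ] Hhalf :=
  -((S.pencil lam)⁻¹ʳ ∘L S.resolventRhs lam)

noncomputable def resolvent (lam : ℂ) : (Hhalf × H) →L[ℂ] (Hhalf × H) :=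
  (S.resolventFst lam).prod (S.ι ∘L (fst ℂ Hhalf H + lam • S.resolventFst lam))

lemma j_eq_iff_Ainv_eq {y : H} {z w : Hhalf} :
    S.j y = S.A₀ z + S.D w ↔ S.Ainv y = z + S.T w := by
  rw [← S.A₀.symm.injective.eq_iff, map_add, LinearIsometryEquiv.symm_apply_apply]
  rfl

/-- Eliminating `w = f + λ z` and `y = -g - λ w` turns `(𝒜 - λ)(z, w) = (f, g)` into
`A₀⁻¹ L(λ) z = -(A₀⁻¹ D f + λ A₀⁻¹ f + A₀⁻¹ g)`. -/
lemma j_eq_iff_pencil_apply_eq (lam : ℂ) (z f : Hhalf) (g : H) :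
    S.j (-g - lam • S.ι (f + lam • z)) = S.A₀ z + S.D (f + lam • z) ↔
      S.pencil lam z = -S.resolventRhs lam (f, g) := by
  have key : S.Ainv (-g - lam • S.ι (f + lam • z)) - (z + S.T (f + lam • z)) =
      -(S.pencil lam z + S.resolventRhs lam (f, g)) := by
    simp only [pencil, resolventRhs, AinvR, map_sub, map_neg, map_add, map_smul, add_apply,
      one_apply_eq_self, smul_apply, comp_apply, coe_fst', coe_snd']
    module
  rw [j_eq_iff_Ainv_eq, ← sub_eq_zero, key, neg_eq_zero, eq_neg_iff_add_eq_zero]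

variable {S} {lam : ℂ}

lemma pencil_apply_resolventFst (hu : IsUnit (S.pencil lam)) (q : Hhalf × H) :
    S.pencil lam (S.resolventFst lam q) = -S.resolventRhs lam q := by
  simp only [resolventFst, neg_apply, comp_apply, map_neg, ← mul_apply_eq_comp,
    Ring.mul_inverse_cancel _ hu, one_apply_eq_self]

lemma resolventFst_eq_of_pencil_apply_eq (hu : IsUnit (S.pencil lam)) {z : Hhalf}
    {q : Hhalf × H} (hz : S.pencil lam z = -S.resolventRhs lam q) :
    S.resolventFst lam q = z := by
  rw [resolventFst, neg_apply, comp_apply, neg_eq_iff_eq_neg.mp hz.symm, map_neg, neg_neg,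
    ← mul_apply_eq_comp, Ring.inverse_mul_cancel _ hu, one_apply_eq_self]

theorem inResolvent_of_isUnit_pencil (hu : IsUnit (S.pencil lam)) : S.InResolvent lam := by
  refine ⟨S.resolvent lam, fun ⟨f, g⟩ => ?_, fun z w y hy => ?_⟩
  · set z := S.resolventFst lam (f, g)
    refine ⟨z, f + lam • z, -g - lam • S.ι (f + lam • z), rfl,
      (S.j_eq_iff_pencil_apply_eq lam z f g).2 (pencil_apply_resolventFst hu _), ?_⟩
    simp only [Prod.smul_mk, Prod.mk_sub_mk, neg_sub, sub_neg_eq_add, add_sub_cancel_right,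
      add_sub_cancel_left]
  · obtain ⟨f, rfl⟩ : ∃ f, w = f + lam • z := ⟨w - lam • z, (sub_add_cancel _ _).symm⟩
    obtain ⟨g, rfl⟩ : ∃ g, y = -g - lam • S.ι (f + lam • z) :=
      ⟨-y - lam • S.ι (f + lam • z), by abel⟩
    have hz := resolventFst_eq_of_pencil_apply_eq hu
      ((S.j_eq_iff_pencil_apply_eq lam z f g).1 hy)
    simp only [Prod.smul_mk, Prod.mk_sub_mk, add_sub_cancel_right, neg_sub, sub_neg_eq_add,
      add_sub_cancel_left, resolvent, prod_apply, comp_apply, add_apply, smul_apply,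
      coe_fst', hz]

lemma isUnit_pencil_of_norm_lt_one (h : ‖lam • S.T + lam ^ 2 • S.AinvR‖ < 1) :
    IsUnit (S.pencil lam) := by
  simpa only [pencil, sub_neg_eq_add] using isUnit_one_sub_of_norm_lt_one
    (x := -(lam • S.T + lam ^ 2 • S.AinvR)) (by rwa [norm_neg])

end BeamSetup

/-- Every `λ ∈ ℂ` with `‖λ A₀⁻¹ D + λ² A₀⁻¹‖_{ℒ(H_{1/2})} < 1` belongs to
the resolvent set of `𝒜`. -/
theorem statement5 {Hhalf H Hm : Type*}
    [NormedAddCommGroup Hhalf] [InnerProductSpace ℂ Hhalf] [CompleteSpace Hhalf]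
    [NormedAddCommGroup H] [InnerProductSpace ℂ H] [CompleteSpace H]
    [NormedAddCommGroup Hm] [InnerProductSpace ℂ Hm] [CompleteSpace Hm]
    (S : BeamSetup Hhalf H Hm) (lam : ℂ)
    (h : ‖lam • S.T + lam ^ 2 • S.AinvR‖ < 1) :
    S.InResolvent lam :=
  inResolvent_of_isUnit_pencil (isUnit_pencil_of_norm_lt_one h)
end
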